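/- Let p be an odd prime, let H be the group (under matrix multiplication) of 3×3 upper unitriangular matrices over ℤ/pℤ (matrices U(a,b,c) with diagonal entries 1, entries a,b,c in positions (1,2),(1,3),(2,3) respectively, and 0 below the diagonal), and let G = H × ℤ/2ℤ. For x ∈ ℤ/pℤ with x ≠ 0 define α_x = (U(x,x,0), 0) and β_x = (U(0,x,x), 1), and let S₁ = {α_x : x ≠ 0} ∪ {β_x : x ≠ 0}. Then every element of G of the form (U(a,b,c), 1) with c ≠ 0 can be expressed as a product of at most 3 elements of S₁. -/
import Mathlib


/-- The upper unitriangular matrix `U(a,b,c) = [[1,a,b],[0,1,c],[0,0,1]]` over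
`ℤ/pℤ`.  These matrices form the upper unitriangular subgroup `H` of
`SL(3,p)` under matrix multiplication. -/
def uniTri (p : ℕ) (a b c : ZMod p) : Matrix (Fin 3) (Fin 3) (ZMod p) :=
  !![1, a, b; 0, 1, c; 0, 0, 1]

/-- The ambient monoid containing `G = H × ℤ/2ℤ` (matrix multiplication in the
first component, addition in `ℤ/2ℤ`, written multiplicatively, in the
second). -/
abbrev UniTriZ2 (p : ℕ) : Type :=
  Matrix (Fin 3) (Fin 3) (ZMod p) × Multiplicative (ZMod 2)

/-- `α_x = (U(x,x,0), 0)` for `x ≠ 0`. -/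
def alphaGen (p : ℕ) (x : ZMod p) : UniTriZ2 p :=
  (uniTri p x x 0, Multiplicative.ofAdd 0)

/-- `β_x = (U(0,x,x), 1)` for `x ≠ 0`. -/
def betaGen (p : ℕ) (x : ZMod p) : UniTriZ2 p :=
  (uniTri p 0 x x, Multiplicative.ofAdd 1)

/-- The set `S₁ = {α_x : x ≠ 0} ∪ {β_x : x ≠ 0}`. -/
def matGenSet (p : ℕ) : Set (UniTriZ2 p) :=
  {g | ∃ x : ZMod p, x ≠ 0 ∧ (g = alphaGen p x ∨ g = betaGen p x)}

lemma uniTri_mul (p : ℕ) (a b c a' b' c' : ZMod p) :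
    uniTri p a b c * uniTri p a' b' c' = uniTri p (a+a') (b+b'+a*c') (c+c') := by
  unfold uniTri
  ext i j
  fin_cases i <;> fin_cases j <;>
    simp [Matrix.mul_apply, Fin.sum_univ_three, Matrix.vecHead, Matrix.vecTail] <;> ring

/-- For an odd prime `p`, every element of `G = H × ℤ/2ℤ` of the form
`(U(a,b,c), 1)` with `c ≠ 0` is a product of at most `3` elements of `S₁`. -/
theorem matrix_cover_second_component (p : ℕ) (hp : p.Prime) (hodd : Odd p)
    (a b c : ZMod p) (hc : c ≠ 0) :
    ∃ l : List (UniTriZ2 p), l.length ≤ 3 ∧ (∀ v ∈ l, v ∈ matGenSet p) ∧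
      l.prod = (uniTri p a b c, Multiplicative.ofAdd 1) := by
  haveI := Fact.mk hp
  have h2 : (2 : ZMod p) ≠ 0 := by
    intro h
    have h' : ((2:ℕ) : ZMod p) = 0 := by exact_mod_cast h
    rw [ZMod.natCast_eq_zero_iff] at h'
    rcases (Nat.prime_two.eq_one_or_self_of_dvd p h') with h1 | h1
    · exact hp.one_lt.ne' h1
    · rw [h1] at hodd
      simp [Nat.odd_iff] at hodd
  have key : ∀ A B C : ZMod p, A = a → B = b → C = c →
      uniTri p A B C = uniTri p a b c := by
    rintro _ _ _ rfl rfl rfl; rfl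
  set x : ZMod p := (b - a - c) / c with hxdef
  have hx : x * c = b - a - c := div_mul_cancel₀ _ hc
  clear_value x
  clear hxdef
  by_cases hx0 : x = 0
  · have hb : b = a + c := by
      have h' := hx; rw [hx0, zero_mul] at h'
      linear_combination -h'
    by_cases ha : a = 0
    · refine ⟨[betaGen p c], by simp, ?_, ?_⟩
      · rintro v hv
        simp only [List.mem_cons, List.not_mem_nil, or_false] at hv
        exact ⟨c, hc, Or.inr hv⟩
      · simp only [List.prod_cons, List.prod_nil, mul_one, betaGen, Prod.mk.injEq]
        exact ⟨key _ _ _ ha.symm (by rw [hb, ha, zero_add]) rfl, by decide⟩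
    · set h := (2 : ZMod p)⁻¹ * a with hh
      have hhne : h ≠ 0 := mul_ne_zero (inv_ne_zero h2) ha
      have hhh : h + h = a := by
        rw [hh]; field_simp; ring
      refine ⟨[betaGen p c, alphaGen p h, alphaGen p h], by simp, ?_, ?_⟩
      · rintro v hv
        simp only [List.mem_cons, List.not_mem_nil, or_false] at hv
        rcases hv with hv | hv | hv
        · exact ⟨c, hc, Or.inr hv⟩
        · exact ⟨h, hhne, Or.inl hv⟩
        · exact ⟨h, hhne, Or.inl hv⟩
      · simp only [List.prod_cons, List.prod_nil, mul_one, alphaGen, betaGen, Prod.mk_mul_mk,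
          Prod.mk.injEq]
        refine ⟨?_, by decide⟩
        rw [← mul_assoc, uniTri_mul, uniTri_mul]
        exact key _ _ _ (by linear_combination hhh)
          (by linear_combination hhh - hb) (by ring)
  · by_cases hxa : x = a
    · have hb : b = a + c + a * c := by linear_combination c * hxa - hx
      have ha : a ≠ 0 := hxa ▸ hx0
      refine ⟨[alphaGen p a, betaGen p c], by simp, ?_, ?_⟩
      · rintro v hv
        simp only [List.mem_cons, List.not_mem_nil, or_false] at hv
        rcases hv with hv | hv
        · exact ⟨a, ha, Or.inl hv⟩
        · exact ⟨c, hc, Or.inr hv⟩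
      · simp only [List.prod_cons, List.prod_nil, mul_one, alphaGen, betaGen, Prod.mk_mul_mk,
          Prod.mk.injEq]
        refine ⟨?_, by decide⟩
        rw [uniTri_mul]
        exact key _ _ _ (by ring) (by linear_combination -hb) (by ring)
    · have hax : a - x ≠ 0 := fun h => hxa (by linear_combination -h)
      refine ⟨[alphaGen p x, betaGen p c, alphaGen p (a - x)], by simp, ?_, ?_⟩
      · rintro v hv
        simp only [List.mem_cons, List.not_mem_nil, or_false] at hv
        rcases hv with hv | hv | hv
        · exact ⟨x, hx0, Or.inl hv⟩
        · exact ⟨c, hc, Or.inr hv⟩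
        · exact ⟨a - x, hax, Or.inl hv⟩
      · simp only [List.prod_cons, List.prod_nil, mul_one, alphaGen, betaGen, Prod.mk_mul_mk,
          Prod.mk.injEq]
        refine ⟨?_, by decide⟩
        rw [← mul_assoc, uniTri_mul, uniTri_mul]
        exact key _ _ _ (by ring) (by linear_combination hx) (by ring)
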